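/- arXiv:2406.11056 — 3 statements merged into one kernel-verified Lean document; each statement's English description precedes it below -/
import Mathlib

section
/- Let m, n, w, h, p be natural numbers, let A⁰, A¹, …, A^w be real m×n matrices (a matrix zonotope with center A⁰ and generators A¹,…,A^w), let c ∈ ℝⁿ, let G₁,…,G_h ∈ ℝⁿ, and let E be a p×h matrix of natural numbers (the exponent matrix of a polynomial zonotope with no independent generators). Then the set { (A⁰ + ∑_{l=1}^{w} ρ_l A^l)(c + ∑_{i=1}^{h} (∏_{k=1}^{p} α_k^{E(k,i)}) G_i) : ρ_l ∈ [-1,1] for all l, α_k ∈ [-1,1] for all k } equals the set { A⁰c + ∑_{i=1}^{h} (∏_{k=1}^{p} α_k^{E(k,i)}) (A⁰ G_i) + ∑_{l=1}^{w} ρ_l (A^l c) + ∑_{l=1}^{w} ∑_{i=1}^{h} ρ_l (∏_{k=1}^{p} α_k^{E(k,i)}) (A^l G_i) : ρ_l ∈ [-1,1], α_k ∈ [-1,1] }, i.e. the product of a matrix zonotope with a polynomial zonotope without independent generators is again a polynomial zonotope whose dependent generators are A⁰G_i, A^l c, and A^l G_i with the indicated monomial coefficients. -/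
open Matrix

theorem add_sum_smul_mulVec_add_sum_smul {R ι κ m n : Type*} [CommSemiring R] [Fintype n]
    [Fintype ι] [Fintype κ] (A₀ : Matrix m n R) (A : ι → Matrix m n R) (ρ : ι → R)
    (c : n → R) (G : κ → n → R) (β : κ → R) :
    (A₀ + ∑ l, ρ l • A l) *ᵥ (c + ∑ i, β i • G i) =
      A₀ *ᵥ c + (∑ i, β i • (A₀ *ᵥ G i)) + (∑ l, ρ l • (A l *ᵥ c))
        + ∑ l, ∑ i, (ρ l * β i) • (A l *ᵥ G i) := by
  simp only [add_mulVec, mulVec_add, sum_mulVec, mulVec_sum, smul_mulVec, mulVec_smul,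
    smul_add, Finset.smul_sum, Finset.sum_add_distrib, mul_smul]
  rw [Finset.sum_comm (f := fun i l => β i • ρ l • (A l *ᵥ G i))]
  simp only [smul_comm (β _) (ρ _)]
  abel

/-- The product of a matrix zonotope (center `A0`, generators `A l`) with a polynomial
zonotope without independent generators (offset `c`, dependent generators `G i`,
exponent matrix `E`) is again a polynomial zonotope with dependent generators
`A0 *ᵥ G i`, `A l *ᵥ c`, and `A l *ᵥ G i` with the indicated monomial coefficients. -/
theorem matrix_zonotope_mul_polyZonotope (m n w h p : ℕ)
    (A0 : Matrix (Fin m) (Fin n) ℝ) (A : Fin w → Matrix (Fin m) (Fin n) ℝ)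
    (c : Fin n → ℝ) (G : Fin h → Fin n → ℝ) (E : Fin p → Fin h → ℕ) :
    {y : (Fin m → ℝ) | ∃ (ρ : Fin w → ℝ) (α : Fin p → ℝ),
        (∀ l, ρ l ∈ Set.Icc (-1 : ℝ) 1) ∧ (∀ k, α k ∈ Set.Icc (-1 : ℝ) 1) ∧
        y = (A0 + ∑ l, ρ l • A l) *ᵥ
              (c + ∑ i, (∏ k, α k ^ E k i) • G i)} =
    {y : (Fin m → ℝ) | ∃ (ρ : Fin w → ℝ) (α : Fin p → ℝ),
        (∀ l, ρ l ∈ Set.Icc (-1 : ℝ) 1) ∧ (∀ k, α k ∈ Set.Icc (-1 : ℝ) 1) ∧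
        y = A0 *ᵥ c + (∑ i, (∏ k, α k ^ E k i) • (A0 *ᵥ G i))
              + (∑ l, ρ l • (A l *ᵥ c))
              + ∑ l, ∑ i, (ρ l * ∏ k, α k ^ E k i) • (A l *ᵥ G i)} := by
  simp only [add_sum_smul_mulVec_add_sum_smul]
end

section
/- Let A be a real n×n matrix, let ‖·‖ be the operator norm on real n×n matrices induced by the ℓ∞ vector norm, let Δt > 0, and let ψ > 0. Set ζ := min(ψ/2, 1/2). If κ is a natural number with κ > (‖A‖ Δt · e)/ζ − 1 (where e is Euler's number), then ε := (‖A‖ Δt)/(κ+2) < 1 and ((‖A‖ Δt)^{κ+1} / (κ+1)!) · 1/(1−ε) < ψ. In particular, the number of Taylor terms κ required to make the truncation error bound of the matrix exponential over the time interval [0, Δt] smaller than ψ grows at most linearly in Δt. -/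
open Matrix

-- equip square matrices with the operator norm induced by the ℓ∞ vector norm
attribute [local instance] Matrix.linftyOpNormedRing Matrix.linftyOpNormedAlgebra

/-- If `κ > (‖A‖Δt·e)/ζ - 1` with `ζ = min(ψ/2, 1/2)`, then `ε = ‖A‖Δt/(κ+2) < 1` and
the truncation error bound `((‖A‖Δt)^{κ+1}/(κ+1)!) · 1/(1-ε)` is smaller than `ψ`;
hence the number of Taylor terms required for error `ψ` grows at most linearly in `Δt`. -/
theorem taylor_terms_linear_in_timestep (n : ℕ) (A : Matrix (Fin n) (Fin n) ℝ)
    (Δt : ℝ) (hΔt : 0 < Δt) (ψ : ℝ) (hψ : 0 < ψ) (κ : ℕ)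
    (hκ : (κ : ℝ) > ‖A‖ * Δt * Real.exp 1 / min (ψ / 2) (1 / 2) - 1) :
    ‖A‖ * Δt / (κ + 2) < 1 ∧
    (‖A‖ * Δt) ^ (κ + 1) / (Nat.factorial (κ + 1)) *
        (1 / (1 - ‖A‖ * Δt / (κ + 2))) < ψ := by
  set x : ℝ := ‖A‖ * Δt with hxdef
  have hx : 0 ≤ x := mul_nonneg (norm_nonneg _) hΔt.le
  clear_value x
  set ζ : ℝ := min (ψ / 2) (1 / 2) with hζdef
  have hζ0 : 0 < ζ := lt_min (by linarith) (by norm_num)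
  have hζ2 : ζ ≤ 1 / 2 := min_le_right _ _
  have hζψ : ζ ≤ ψ / 2 := min_le_left _ _
  have hN : (0:ℝ) < (κ:ℝ) + 1 := by positivity
  -- core inequality: x * e < ζ * (κ+1)
  have hmain : x * Real.exp 1 < ζ * ((κ:ℝ) + 1) := by
    have := hκ
    rw [gt_iff_lt, sub_lt_iff_lt_add, div_lt_iff₀ hζ0] at this
    linarith [this]
  have he1 : (1:ℝ) ≤ Real.exp 1 := by
    have := Real.add_one_le_exp (1:ℝ); linarith
  have hxsmall : x < ((κ:ℝ) + 1) / 2 := by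
    nlinarith [mul_le_mul_of_nonneg_left he1 hx]
  have hden : (0:ℝ) < (κ:ℝ) + 2 := by positivity
  have hε : x / ((κ:ℝ) + 2) < 1 / 2 := by
    rw [div_lt_iff₀ hden]; linarith
  refine ⟨by linarith, ?_⟩
  -- factorial bound: (κ+1)^(κ+1)/(κ+1)! ≤ e^(κ+1)
  have hfact : ((κ:ℝ) + 1) ^ (κ + 1) / (Nat.factorial (κ + 1)) ≤ Real.exp 1 ^ (κ + 1) := by
    have h := Real.pow_div_factorial_le_exp (x := ((κ:ℝ) + 1)) (by positivity) (κ + 1)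
    have he : Real.exp ((κ:ℝ) + 1) = Real.exp 1 ^ (κ + 1) := by
      rw [Real.exp_one_pow]; push_cast; ring_nf
    rw [he] at h
    exact h
  have hfpos : (0:ℝ) < (Nat.factorial (κ + 1) : ℝ) := by positivity
  -- term1 bound
  have h1 : x ^ (κ + 1) / (Nat.factorial (κ + 1)) ≤ (x * Real.exp 1 / ((κ:ℝ) + 1)) ^ (κ + 1) := by
    rw [div_pow, mul_pow, div_le_div_iff₀ hfpos (by positivity)]
    calc x ^ (κ + 1) * ((κ:ℝ) + 1) ^ (κ + 1)
        = x ^ (κ + 1) * (((κ:ℝ) + 1) ^ (κ + 1) / (Nat.factorial (κ + 1)) * (Nat.factorial (κ + 1))) := by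
          field_simp
      _ ≤ x ^ (κ + 1) * (Real.exp 1 ^ (κ + 1) * (Nat.factorial (κ + 1))) := by
          apply mul_le_mul_of_nonneg_left _ (by positivity)
          exact mul_le_mul_of_nonneg_right hfact hfpos.le
      _ = x ^ (κ + 1) * Real.exp 1 ^ (κ + 1) * (Nat.factorial (κ + 1)) := by ring
  have h2 : (x * Real.exp 1 / ((κ:ℝ) + 1)) ^ (κ + 1) < ζ ^ (κ + 1) := by
    apply pow_lt_pow_left₀ _ (by positivity) (Nat.succ_ne_zero κ)
    rw [div_lt_iff₀ hN]
    linarith [hmain]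
  have h3 : ζ ^ (κ + 1) ≤ ζ := by
    calc ζ ^ (κ + 1) ≤ ζ ^ 1 := pow_le_pow_of_le_one hζ0.le (by linarith) (by omega)
      _ = ζ := pow_one ζ
  have hterm : x ^ (κ + 1) / (Nat.factorial (κ + 1)) < ψ / 2 := by
    calc x ^ (κ + 1) / (Nat.factorial (κ + 1)) ≤ (x * Real.exp 1 / ((κ:ℝ) + 1)) ^ (κ + 1) := h1
      _ < ζ ^ (κ + 1) := h2
      _ ≤ ζ := h3
      _ ≤ ψ / 2 := hζψ
  have hεnn : 0 ≤ x / ((κ:ℝ) + 2) := by positivity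
  have hfac : 1 / (1 - x / ((κ:ℝ) + 2)) ≤ 2 := by
    rw [div_le_iff₀ (by linarith)]; linarith
  have hfacpos : 0 ≤ 1 / (1 - x / ((κ:ℝ) + 2)) := by
    apply div_nonneg (by norm_num); linarith
  have htermnn : 0 ≤ x ^ (κ + 1) / (Nat.factorial (κ + 1)) := by positivity
  calc x ^ (κ + 1) / (Nat.factorial (κ + 1)) * (1 / (1 - x / ((κ:ℝ) + 2)))
      ≤ x ^ (κ + 1) / (Nat.factorial (κ + 1)) * 2 := mul_le_mul_of_nonneg_left hfac htermnn
    _ < ψ / 2 * 2 := by linarith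
    _ = ψ := by ring
end

section
/- Let A be a real n×n matrix, let ‖·‖ be the operator norm on real n×n matrices induced by the ℓ∞ vector norm, let t > 0, and let κ be a natural number such that ε := (‖A‖ t)/(κ+2) < 1. Then ‖ ∫_0^t exp(sA) ds − ∑_{i=0}^{κ} (t^{i+1}/(i+1)!) Aⁱ ‖ ≤ t · ((‖A‖ t)^{κ+1} / (κ+1)!) · 1/(1−ε). -/
/-!
On `[0, t]` the integrand `exp (s • A)` differs from its degree-`κ` Taylor polynomial by the tail
`∑_{m > κ} (s • A)ᵐ / m!`. Since `(κ + 1 + i)! ≥ (κ + 1)! (κ + 2)ⁱ`, this tail is dominated by a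
geometric series of ratio `ε = ‖A‖ t / (κ + 2)`, so its norm is at most
`(‖A‖ t)^(κ+1) / (κ+1)! · 1 / (1 - ε)` uniformly in `s`. Integrating the Taylor polynomial term
by term gives the finite sum, and integrating the uniform bound over `[0, t]` gives the factor `t`.
-/

open Nat Finset NormedSpace

attribute [local instance] Matrix.linftyOpNormedRing Matrix.linftyOpNormedAlgebra

theorem pow_add_div_factorial_le_mul_geometric {r : ℝ} (hr : 0 ≤ r) (k i : ℕ) :
    r ^ (k + i) / (k + i)! ≤ r ^ k / k ! * (r / (k + 1)) ^ i := by
  have hfac : (k ! : ℝ) * (k + 1) ^ i ≤ (k + i)! := mod_cast factorial_mul_pow_le_factorial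
  calc r ^ (k + i) / (k + i)! ≤ r ^ (k + i) / (k ! * (k + 1) ^ i) := by gcongr
    _ = r ^ k / k ! * (r / (k + 1)) ^ i := by rw [pow_add, div_pow]; field_simp

section ExpTaylor

variable {𝔸 : Type*} [NormedRing 𝔸] [NormedAlgebra ℝ 𝔸]

theorem norm_inv_factorial_smul_pow_le (x : 𝔸) {m : ℕ} (hm : 0 < m) :
    ‖(m !⁻¹ : ℝ) • x ^ m‖ ≤ ‖x‖ ^ m / m ! := by
  rw [norm_smul, norm_inv, Real.norm_natCast, inv_mul_eq_div]
  gcongr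
  exact norm_pow_le' x hm

theorem norm_exp_sub_sum_range_le [CompleteSpace 𝔸] {x : 𝔸} {r : ℝ} (hx : ‖x‖ ≤ r) (κ : ℕ)
    (hr : r / (κ + 2) < 1) :
    ‖exp x - ∑ i ∈ range (κ + 1), (i !⁻¹ : ℝ) • x ^ i‖ ≤
      r ^ (κ + 1) / (κ + 1)! * (1 / (1 - r / (κ + 2))) := by
  have hr0 : 0 ≤ r := (norm_nonneg x).trans hx
  have htail : exp x - ∑ i ∈ range (κ + 1), (i !⁻¹ : ℝ) • x ^ i =
      ∑' i, ((i + (κ + 1))!⁻¹ : ℝ) • x ^ (i + (κ + 1)) := by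
    rw [← (exp_series_hasSum_exp' (𝕂 := ℝ) x).tsum_eq,
      ← (expSeries_summable' x).sum_add_tsum_nat_add (κ + 1), add_sub_cancel_left]
  rw [htail, one_div]
  refine tsum_of_norm_bounded ((hasSum_geometric_of_lt_one (by positivity) hr).mul_left _)
    fun i => ?_
  calc ‖((i + (κ + 1))!⁻¹ : ℝ) • x ^ (i + (κ + 1))‖
      ≤ ‖x‖ ^ (i + (κ + 1)) / (i + (κ + 1))! := norm_inv_factorial_smul_pow_le x (by omega)
    _ ≤ r ^ ((κ + 1) + i) / ((κ + 1) + i)! := by rw [add_comm i]; gcongr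
    _ ≤ r ^ (κ + 1) / (κ + 1)! * (r / (κ + 2)) ^ i := by
      convert pow_add_div_factorial_le_mul_geometric hr0 (κ + 1) i using 4
      push_cast; ring

theorem integral_sum_range_inv_factorial_smul_pow [CompleteSpace 𝔸] (A : 𝔸) (t : ℝ) (k : ℕ) :
    ∫ s in (0 : ℝ)..t, ∑ i ∈ range k, (i !⁻¹ : ℝ) • (s • A) ^ i =
      ∑ i ∈ range k, (t ^ (i + 1) / (i + 1)!) • A ^ i := by
  have hterm (i : ℕ) (s : ℝ) : (i !⁻¹ : ℝ) • (s • A) ^ i = ((i ! : ℝ)⁻¹ * s ^ i) • A ^ i := by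
    rw [smul_pow, smul_smul]
  simp_rw [hterm]
  rw [intervalIntegral.integral_finsetSum fun i _ =>
    (Continuous.intervalIntegrable (by fun_prop) _ _)]
  refine sum_congr rfl fun i _ => ?_
  rw [intervalIntegral.integral_smul_const, intervalIntegral.integral_const_mul, integral_pow,
    zero_pow i.succ_ne_zero, sub_zero, factorial_succ]
  congr 1
  push_cast
  field_simp

end ExpTaylor

/-- Truncation error of the Taylor series of the integrated matrix exponential:
if `ε = ‖A‖t/(κ+2) < 1`, then
`‖∫₀ᵗ exp(sA) ds − ∑_{i=0}^{κ} (t^{i+1}/(i+1)!) Aⁱ‖ ≤ t·((‖A‖t)^{κ+1}/(κ+1)!)·1/(1−ε)`. -/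
theorem integral_matrix_exp_taylor_truncation_bound (n : ℕ)
    (A : Matrix (Fin n) (Fin n) ℝ) (t : ℝ) (ht : 0 < t) (κ : ℕ)
    (hε : ‖A‖ * t / (κ + 2) < 1) :
    ‖(∫ s in (0 : ℝ)..t, NormedSpace.exp (s • A)) -
        ∑ i ∈ Finset.range (κ + 1), (t ^ (i + 1) / (Nat.factorial (i + 1))) • A ^ i‖ ≤
      t * ((‖A‖ * t) ^ (κ + 1) / (Nat.factorial (κ + 1)) *
        (1 / (1 - ‖A‖ * t / (κ + 2)))) := by
  have hbound : ∀ s ∈ Set.uIoc (0 : ℝ) t,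
      ‖exp (s • A) - ∑ i ∈ range (κ + 1), (i !⁻¹ : ℝ) • (s • A) ^ i‖ ≤
        (‖A‖ * t) ^ (κ + 1) / (κ + 1)! * (1 / (1 - ‖A‖ * t / (κ + 2))) := by
    intro s hs
    rw [Set.uIoc_of_le ht.le] at hs
    refine norm_exp_sub_sum_range_le ?_ κ hε
    rw [norm_smul, Real.norm_of_nonneg hs.1.le, mul_comm]
    gcongr
    exact hs.2
  rw [← integral_sum_range_inv_factorial_smul_pow,
    ← intervalIntegral.integral_sub (Continuous.intervalIntegrable (by fun_prop) _ _)
      (Continuous.intervalIntegrable (by fun_prop) _ _)]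
  calc _ ≤ _ * |t - 0| := intervalIntegral.norm_integral_le_of_norm_le_const hbound
    _ = _ := by rw [sub_zero, abs_of_pos ht, mul_comm]
end
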